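/- For any positive integer n and any b with 0 < b < 2n, the periodic coloring of ℤ with period length 4n in which each of the residue-class pairs is colored so that among residues {0,2,...,4n-2} exactly b are white and among {1,3,...,4n-1} exactly b are white, yields a perfect 2-coloring of Ci_∞(D_n) with parameter matrix ((2n-b, b), (2n-b, b)). -/

import Mathlib

/-- Neighborhood of `i` in the infinite circulant graph `Ci_∞(D_n)`,
`D_n = {±1, ±3, …, ±(2n-1)}`: the integers at odd distance less than `2n` from `i`. -/
noncomputable def nbrs (n : ℕ) (i : ℤ) : Finset ℤ :=
  (Finset.Icc (i - (2*(n:ℤ) - 1)) (i + (2*(n:ℤ) - 1))).filter (fun j => Odd (j - i))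

/-- `φ` is a perfect 2-coloring of `Ci_∞(D_n)` with outer degrees `(b, c)`:
every vertex of color 0 (black) has exactly `b` neighbors of color 1 (white), and
every vertex of color 1 has exactly `c` neighbors of color 0. -/
def Perfect2 (n : ℕ) (φ : ℤ → Fin 2) (b c : ℕ) : Prop :=
  (∀ i, φ i = 0 → ((nbrs n i).filter (fun j => φ j = 1)).card = b) ∧
  (∀ i, φ i = 1 → ((nbrs n i).filter (fun j => φ j = 0)).card = c)

/-!
The neighbours of `i` are the `2n` integers `i - (2n - 1) + 2t`, `0 ≤ t < 2n`: they all have the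
parity opposite to `i` and are pairwise incongruent mod `4n`, so they meet every residue class of
that parity mod `4n` exactly once. By `4n`-periodicity `i` therefore has as many white neighbours
as there are white residues of that parity, namely `b`, and the other `2n - b` are black.
-/

open Finset

theorem Function.Periodic.card_filter_range_add {p : ℤ → Prop} [DecidablePred p] {m : ℕ}
    (hp : Function.Periodic p m) (s : ℤ) :
    #{t ∈ range m | p (s + (t : ℕ))} = #{t ∈ range m | p (t : ℕ)} := by
  -- Sliding the window by one drops the term at `s` and adds the equal one at `s + m`.
  have shift (s : ℤ) :
      #{t ∈ range m | p (s + 1 + (t : ℕ))} = #{t ∈ range m | p (s + (t : ℕ))} := by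
    have key := (sum_range_succ (fun t : ℕ => if p (s + t) then 1 else 0) m).symm.trans
      (sum_range_succ' (fun t : ℕ => if p (s + t) then 1 else 0) m)
    simp only [Nat.cast_add, Nat.cast_one, Nat.cast_zero, add_zero, hp s] at key
    simp only [card_filter, add_assoc, add_comm (1 : ℤ)]
    omega
  induction s using Int.induction_on with
  | zero => simp
  | succ k ih => rw [shift, ih]
  | pred k ih => rw [← ih, ← shift, sub_add_cancel]

theorem card_filter_range_two_mul_even (m : ℕ) (q : ℕ → Prop) [DecidablePred q] :
    #{k ∈ range (2 * m) | Even k ∧ q k} = #{t ∈ range m | q (2 * t)} := by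
  refine card_nbij' (· / 2) (2 * ·) ?_ ?_ ?_ ?_ <;>
    simp only [coe_filter, mem_range, Set.MapsTo, Set.LeftInvOn, Set.mem_ofPred_eq, Nat.even_iff]
  · rintro k ⟨hk, hpar, hq⟩
    rw [Nat.two_mul_div_two_of_even (Nat.even_iff.mpr hpar)]
    exact ⟨by omega, hq⟩
  · exact fun k ⟨hk, hq⟩ => ⟨by omega, by omega, hq⟩
  · omega
  · omega

theorem card_filter_range_two_mul_odd (m : ℕ) (q : ℕ → Prop) [DecidablePred q] :
    #{k ∈ range (2 * m) | Odd k ∧ q k} = #{t ∈ range m | q (2 * t + 1)} := by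
  refine card_nbij' (· / 2) (2 * · + 1) ?_ ?_ ?_ ?_ <;>
    simp only [coe_filter, mem_range, Set.MapsTo, Set.LeftInvOn, Set.mem_ofPred_eq, Nat.odd_iff]
  · rintro k ⟨hk, hpar, hq⟩
    rw [Nat.two_mul_div_two_add_one_of_odd (Nat.odd_iff.mpr hpar)]
    exact ⟨by omega, hq⟩
  · exact fun k ⟨hk, hq⟩ => ⟨by omega, by omega, hq⟩
  · omega
  · omega

theorem nbrs_eq_image (n : ℕ) (i : ℤ) :
    nbrs n i = (range (2 * n)).image (fun t : ℕ => i - (2 * n - 1) + 2 * t) := by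
  ext j
  simp only [nbrs, mem_filter, mem_Icc, mem_image, mem_range, Int.odd_iff]
  constructor
  · rintro ⟨⟨hlo, hhi⟩, hodd⟩
    exact ⟨(j - i + 2 * n - 1).toNat / 2, by omega, by omega⟩
  · rintro ⟨t, ht, rfl⟩
    omega

theorem card_filter_nbrs (n : ℕ) (i : ℤ) (p : ℤ → Prop) [DecidablePred p] :
    #{j ∈ nbrs n i | p j} = #{t ∈ range (2 * n) | p (i - (2 * n - 1) + 2 * (t : ℕ))} := by
  rw [nbrs_eq_image, filter_image, card_image_of_injective]
  intro t t' h
  simpa using h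

theorem card_nbrs (n : ℕ) (i : ℤ) : #(nbrs n i) = 2 * n := by
  simpa using card_filter_nbrs n i (fun _ => True)

theorem card_filter_nbrs_of_periodic {α : Type*} {n : ℕ} {φ : ℤ → α}
    (hφ : Function.Periodic φ (4 * n)) (p : α → Prop) [DecidablePred p] {i s r : ℤ}
    (hi : i - (2 * n - 1) = 2 * s + r) :
    #{j ∈ nbrs n i | p (φ j)} =
      #{t ∈ range (2 * n) | p (φ (2 * (t : ℕ) + r))} := by
  have hper : Function.Periodic (fun u : ℤ => p (φ (2 * u + r))) ↑(2 * n) := by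
    intro u
    simp only [← hφ (2 * u + r)]
    push_cast
    ring_nf
  rw [card_filter_nbrs, ← hper.card_filter_range_add s, hi]
  ring_nf

theorem card_filter_eq_zero_add_card_filter_eq_one {α : Type*} (s : Finset α)
    (φ : α → Fin 2) :
    #{j ∈ s | φ j = 0} + #{j ∈ s | φ j = 1} = #s := by
  rw [← card_filter_add_card_filter_not (s := s) (p := (φ · = 0))]
  refine congrArg (_ + ·) (congrArg card (filter_congr fun j _ => ?_))
  generalize φ j = c
  fin_cases c <;> simp

theorem balanced_period_perfect_general (n b : ℕ)
    (φ : ℤ → Fin 2)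
    (hper : ∀ i : ℤ, φ (i + 4*(n:ℤ)) = φ i)
    (heven : ((Finset.range (4*n)).filter (fun i : ℕ => Even i ∧ φ (i : ℤ) = 1)).card = b)
    (hodd : ((Finset.range (4*n)).filter (fun i : ℕ => Odd i ∧ φ (i : ℤ) = 1)).card = b) :
    ∀ i : ℤ, ((nbrs n i).filter (fun j => φ j = 1)).card = b ∧
      ((nbrs n i).filter (fun j => φ j = 0)).card = 2*n - b := by
  intro i
  have hwhite : #{j ∈ nbrs n i | φ j = 1} = b := by
    rw [show 4 * n = 2 * (2 * n) by ring, card_filter_range_two_mul_even] at heven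
    rw [show 4 * n = 2 * (2 * n) by ring, card_filter_range_two_mul_odd] at hodd
    obtain ⟨s, hs | hs⟩ := Int.even_or_odd' (i - (2 * n - 1))
    · rw [card_filter_nbrs_of_periodic hper (· = 1) (r := 0) (by rw [hs, add_zero]), ← heven]
      simp
    · rw [card_filter_nbrs_of_periodic hper (· = 1) hs, ← hodd]
      simp
  have hsplit := card_filter_eq_zero_add_card_filter_eq_one (nbrs n i) φ
  rw [card_nbrs] at hsplit
  exact ⟨hwhite, by omega⟩

/-- Any `4n`-periodic 2-coloring of `ℤ` with exactly `b` white vertices among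
the even residues `{0,2,…,4n-2}` and exactly `b` white vertices among the odd
residues `{1,3,…,4n-1}` is a perfect 2-coloring of `Ci_∞(D_n)` with parameter
matrix `((2n-b, b), (2n-b, b))`. -/
theorem balanced_period_perfect (n b : ℕ) (hn : 0 < n) (hb : 0 < b) (hb2 : b < 2*n)
    (φ : ℤ → Fin 2)
    (hper : ∀ i : ℤ, φ (i + 4*(n:ℤ)) = φ i)
    (heven : ((Finset.range (4*n)).filter (fun i : ℕ => Even i ∧ φ (i : ℤ) = 1)).card = b)
    (hodd : ((Finset.range (4*n)).filter (fun i : ℕ => Odd i ∧ φ (i : ℤ) = 1)).card = b) :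
    ∀ i : ℤ, ((nbrs n i).filter (fun j => φ j = 1)).card = b ∧
      ((nbrs n i).filter (fun j => φ j = 0)).card = 2*n - b :=
  balanced_period_perfect_general n b φ hper heven hodd
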